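/- For every natural number n, ∑_{k=0}^{n} (-1/4)^k · binom(n,k) · binom(2k,k) · O_k = -(1/4)^n · binom(2n,n) · O_n. -/

import Mathlib

/-!
Writing `(t)_k = t (t + 1) ⋯ (t + k - 1)`, the Chu–Vandermonde identity gives
`∑_k (-1)^k C(n,k) (t)_k / k! = (1 - t)_n / n!` for every `t`. Differentiate at `t = 1/2`:
there `(1/2)_k / k! = C(2k,k) / 4^k`, and the logarithmic derivative of `(t)_k` is
`∑_{i<k} 1 / (1/2 + i) = 2 O_k`.
-/

/-- The `r`-th odd harmonic number `O_r = ∑_{i=1}^r 1/(2i-1)` (with `O_0 = 0`). -/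
noncomputable def O (r : ℕ) : ℝ := ∑ i ∈ Finset.range r, 1 / (2 * (i : ℝ) + 1)

open Finset Polynomial

theorem Ring.sum_neg_one_pow_mul_choose_mul_multichoose {R : Type*} [CommRing R]
    [BinomialRing R] (n : ℕ) (t : R) :
    ∑ k ∈ range (n + 1), (-1) ^ k * (n.choose k : R) * multichoose t k
      = multichoose (1 - t) n := by
  have h := add_choose_eq (r := -t) (s := (n : R)) n (Commute.all _ _)
  rw [Nat.sum_antidiagonal_eq_sum_range_succ (fun i j => choose (-t) i * choose (n : R) j)] at h
  rw [multichoose_eq, show 1 - t + n - 1 = -t + n by ring, h]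
  refine sum_congr rfl fun k hk => ?_
  rw [choose_neg', choose_natCast, Nat.choose_symm (Nat.lt_succ_iff.mp (mem_range.mp hk)),
    Units.smul_def, zsmul_eq_mul, Int.coe_negOnePow_natCast]
  push_cast
  ring

theorem Ring.multichoose_eq_eval_ascPochhammer_div {K : Type*} [Field K] [CharZero K]
    [BinomialRing K] (t : K) (k : ℕ) :
    multichoose t k = (ascPochhammer K k).eval t / k.factorial := by
  rw [eq_div_iff (Nat.cast_ne_zero.mpr k.factorial_ne_zero), mul_comm, ← nsmul_eq_mul,
    factorial_nsmul_multichoose_eq_ascPochhammer, ascPochhammer_smeval_eq_eval]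

theorem sum_C_mul_ascPochhammer_eq_comp_one_sub {K : Type*} [Field K] [CharZero K]
    [BinomialRing K] (n : ℕ) :
    ∑ k ∈ range (n + 1), C ((-1) ^ k * n.choose k / k.factorial : K) * ascPochhammer K k
      = C (n.factorial : K)⁻¹ * (ascPochhammer K n).comp (1 - X) := by
  refine Polynomial.funext fun t => ?_
  have h := Ring.sum_neg_one_pow_mul_choose_mul_multichoose n t
  simp only [Ring.multichoose_eq_eval_ascPochhammer_div] at h
  simp only [eval_finsetSum, eval_mul, eval_C, eval_comp, eval_sub, eval_one, eval_X]
  rw [inv_mul_eq_div, ← h]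
  exact sum_congr rfl fun k _ => by ring

theorem sum_mul_eval_derivative_ascPochhammer {K : Type*} [Field K] [CharZero K]
    [BinomialRing K] (n : ℕ) (x : K) :
    ∑ k ∈ range (n + 1), (-1) ^ k * n.choose k / k.factorial
        * (derivative (ascPochhammer K k)).eval x
      = -(n.factorial : K)⁻¹ * (derivative (ascPochhammer K n)).eval (1 - x) := by
  have h := congrArg (fun p => (derivative p).eval x) (sum_C_mul_ascPochhammer_eq_comp_one_sub n)
  simp only [derivative_sum, derivative_C_mul, derivative_comp, eval_finsetSum, eval_mul, eval_C,
    eval_comp, derivative_sub, derivative_one, derivative_X, eval_sub, eval_one, eval_X,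
    eval_neg, zero_sub] at h
  rw [h]
  ring

theorem eval_derivative_ascPochhammer {K : Type*} [Field K] (k : ℕ) (x : K)
    (hx : ∀ i < k, x + i ≠ 0) :
    (derivative (ascPochhammer K k)).eval x
      = (ascPochhammer K k).eval x * ∑ i ∈ range k, (x + i)⁻¹ := by
  induction k with
  | zero => simp
  | succ k ih =>
    have hk : x + k ≠ 0 := hx k k.lt_succ_self
    rw [ascPochhammer_succ_right, derivative_mul, sum_range_succ]
    simp only [eval_add, eval_mul, derivative_add, derivative_X, derivative_natCast, eval_X,
      eval_natCast, add_zero, eval_one]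
    rw [ih fun i hi => hx i (hi.trans k.lt_succ_self)]
    field_simp

theorem eval_half_ascPochhammer (k : ℕ) :
    (ascPochhammer ℝ k).eval (1 / 2) = (2 * k).choose k * k.factorial / 4 ^ k := by
  rw [← Nat.centralBinom_eq_two_mul_choose]
  induction k with
  | zero => simp
  | succ k ih =>
    have h : ((k + 1 : ℕ) : ℝ) * (k + 1).centralBinom = 2 * (2 * k + 1) * k.centralBinom := by
      exact_mod_cast Nat.succ_mul_centralBinom_succ k
    rw [ascPochhammer_succ_right, eval_mul, ih, Nat.factorial_succ]
    simp only [eval_add, eval_X, eval_natCast]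
    rw [Nat.cast_mul, ← mul_assoc, mul_comm _ ((k + 1 : ℕ) : ℝ), h, pow_succ]
    field_simp
    ring

theorem sum_range_inv_half_add (k : ℕ) : ∑ i ∈ range k, (1 / 2 + i : ℝ)⁻¹ = 2 * O k := by
  rw [O, mul_sum]
  refine sum_congr rfl fun i _ => ?_
  field_simp
  ring

theorem eval_half_derivative_ascPochhammer (k : ℕ) :
    (derivative (ascPochhammer ℝ k)).eval (1 / 2)
      = 2 * ((2 * k).choose k * k.factorial / 4 ^ k) * O k := by
  rw [eval_derivative_ascPochhammer k _ fun i _ => by positivity, sum_range_inv_half_add,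
    eval_half_ascPochhammer]
  ring

theorem stmt_9 (n : ℕ) :
    ∑ k ∈ Finset.range (n + 1),
      (-(1/4) : ℝ) ^ k * (n.choose k : ℝ) * ((2 * k).choose k : ℝ) * O k
    = -(1/4 : ℝ) ^ n * ((2 * n).choose n : ℝ) * O n := by
  have h := sum_mul_eval_derivative_ascPochhammer (K := ℝ) n (1 / 2)
  rw [show (1 : ℝ) - 1 / 2 = 1 / 2 by norm_num] at h
  simp only [eval_half_derivative_ascPochhammer] at h
  have hterm (k : ℕ) : (-1) ^ k * (n.choose k : ℝ) / k.factorial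
      * (2 * ((2 * k).choose k * k.factorial / 4 ^ k) * O k)
      = 2 * ((-(1 / 4) : ℝ) ^ k * n.choose k * (2 * k).choose k * O k) := by
    rw [show (-(1 / 4) : ℝ) = -1 / 4 by norm_num, div_pow]
    field_simp
  rw [sum_congr rfl fun k _ => hterm k, ← mul_sum] at h
  rw [one_div_pow]
  field_simp at h ⊢
  linear_combination h
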